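/- arXiv:1909.06633 — 2 statements merged into one kernel-verified Lean document; each statement's English description precedes it below -/
import Mathlib

section
/- Suppose ν > c. Then for every admissible control a : [0,U] → [0,β], the silent-opponent payoff satisfies J(a) ≤ −ν x₀ e^{−x₀}, and the zero control a ≡ 0 attains this bound. (Paper's Theorem 1, case ν > c: against a silent opponent the best response is to remain silent.) -/
open MeasureTheory Real Set

/-- State trajectory `A(t) = x₀ + ∫₀ᵗ a(s) ds` of a control `a`. -/
noncomputable def stateTraj (x₀ : ℝ) (a : ℝ → ℝ) (t : ℝ) : ℝ :=
  x₀ + ∫ s in (0:ℝ)..t, a s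

/-- Silent-opponent payoff
`J(a) = ∫₀ᵁ (c − ν A(s)) e^{−A(s)} a(s) ds − ν A(U) e^{−A(U)}`. -/
noncomputable def silentPayoff (U ν c x₀ : ℝ) (a : ℝ → ℝ) : ℝ :=
  (∫ s in (0:ℝ)..U, (c - ν * stateTraj x₀ a s) * Real.exp (-(stateTraj x₀ a s)) * a s)
    - ν * stateTraj x₀ a U * Real.exp (-(stateTraj x₀ a U))

section Aux

variable {U β x₀ : ℝ} {a : ℝ → ℝ}

lemma aux_intInt (hβ : 0 < β) (ha : Measurable a)
    (hbd : ∀ t ∈ Icc (0:ℝ) U, a t ∈ Icc (0:ℝ) β)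
    {t₁ t₂ : ℝ} (h0 : 0 ≤ t₁) (h12 : t₁ ≤ t₂) (h2 : t₂ ≤ U) :
    IntervalIntegrable a volume t₁ t₂ := by
  rw [intervalIntegrable_iff_integrableOn_Ioc_of_le h12]
  refine Integrable.mono' (g := fun _ => β)
    (integrableOn_const measure_Ioc_lt_top.ne)
    (ha.aestronglyMeasurable.restrict) ?_
  refine (ae_restrict_iff' measurableSet_Ioc).2 (Filter.Eventually.of_forall fun s hs => ?_)
  have hmem : s ∈ Icc (0:ℝ) U := ⟨le_trans h0 hs.1.le, le_trans hs.2 h2⟩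
  have := hbd s hmem
  rw [Real.norm_eq_abs, abs_of_nonneg this.1]
  exact this.2

lemma aux_diff (hβ : 0 < β) (ha : Measurable a)
    (hbd : ∀ t ∈ Icc (0:ℝ) U, a t ∈ Icc (0:ℝ) β)
    {t₁ t₂ : ℝ} (h0 : 0 ≤ t₁) (h12 : t₁ ≤ t₂) (h2 : t₂ ≤ U) :
    stateTraj x₀ a t₂ - stateTraj x₀ a t₁ = ∫ s in t₁..t₂, a s := by
  have h := intervalIntegral.integral_add_adjacent_intervals
    (aux_intInt hβ ha hbd le_rfl h0 (le_trans h12 h2))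
    (aux_intInt hβ ha hbd h0 h12 h2)
  simp only [stateTraj]
  linarith

lemma aux_mono (hβ : 0 < β) (ha : Measurable a)
    (hbd : ∀ t ∈ Icc (0:ℝ) U, a t ∈ Icc (0:ℝ) β)
    {t₁ t₂ : ℝ} (h0 : 0 ≤ t₁) (h12 : t₁ ≤ t₂) (h2 : t₂ ≤ U) :
    stateTraj x₀ a t₁ ≤ stateTraj x₀ a t₂ := by
  rw [← sub_nonneg, aux_diff hβ ha hbd h0 h12 h2]
  refine intervalIntegral.integral_nonneg h12 fun s hs => ?_
  exact (hbd s ⟨le_trans h0 hs.1, le_trans hs.2 h2⟩).1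

lemma aux_lip (hβ : 0 < β) (ha : Measurable a)
    (hbd : ∀ t ∈ Icc (0:ℝ) U, a t ∈ Icc (0:ℝ) β)
    {t₁ t₂ : ℝ} (h0 : 0 ≤ t₁) (h12 : t₁ ≤ t₂) (h2 : t₂ ≤ U) :
    stateTraj x₀ a t₂ - stateTraj x₀ a t₁ ≤ β * (t₂ - t₁) := by
  rw [aux_diff hβ ha hbd h0 h12 h2]
  calc ∫ s in t₁..t₂, a s ≤ ∫ _s in t₁..t₂, β := by
        refine intervalIntegral.integral_mono_on h12
          (aux_intInt hβ ha hbd h0 h12 h2) intervalIntegrable_const fun s hs => ?_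
        exact (hbd s ⟨le_trans h0 hs.1, le_trans hs.2 h2⟩).2
    _ = β * (t₂ - t₁) := by rw [intervalIntegral.integral_const, smul_eq_mul, mul_comm]

lemma aux_zero : stateTraj x₀ a 0 = x₀ := by simp [stateTraj]

lemma aux_range (hβ : 0 < β) (ha : Measurable a)
    (hbd : ∀ t ∈ Icc (0:ℝ) U, a t ∈ Icc (0:ℝ) β)
    {t : ℝ} (ht : t ∈ Icc (0:ℝ) U) :
    stateTraj x₀ a t ∈ Icc x₀ (x₀ + β * U) := by
  constructor
  · have := aux_mono (x₀ := x₀) hβ ha hbd le_rfl ht.1 ht.2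
    rwa [aux_zero] at this
  · have h1 := aux_lip (x₀ := x₀) hβ ha hbd le_rfl ht.1 ht.2
    rw [aux_zero] at h1
    have h2 : β * (t - 0) ≤ β * U := by nlinarith [ht.2, hβ]
    linarith

/-- Continuity of the state trajectory on `[0, U]`. -/
lemma aux_cont (hβ : 0 < β) (ha : Measurable a)
    (hbd : ∀ t ∈ Icc (0:ℝ) U, a t ∈ Icc (0:ℝ) β) :
    ContinuousOn (stateTraj x₀ a) (Icc (0:ℝ) U) := by
  have : LipschitzOnWith (Real.toNNReal β) (stateTraj x₀ a) (Icc (0:ℝ) U) := by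
    rw [lipschitzOnWith_iff_dist_le_mul]
    intro x hx y hy
    rcases le_total y x with h | h
    · rw [Real.dist_eq, Real.dist_eq, abs_of_nonneg (by linarith : (0:ℝ) ≤ x - y),
        abs_of_nonneg (sub_nonneg.2 (aux_mono hβ ha hbd hy.1 h hx.2))]
      have := aux_lip (x₀ := x₀) hβ ha hbd hy.1 h hx.2
      rw [Real.coe_toNNReal β hβ.le]
      linarith
    · rw [Real.dist_eq, Real.dist_eq, abs_of_nonpos (by linarith : x - y ≤ 0),
        abs_of_nonpos (sub_nonpos.2 (aux_mono hβ ha hbd hx.1 h hy.2))]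
      have := aux_lip (x₀ := x₀) hβ ha hbd hx.1 h hy.2
      rw [Real.coe_toNNReal β hβ.le]
      linarith
  exact this.continuousOn

lemma aux_fInt (hβ : 0 < β) (ha : Measurable a)
    (hbd : ∀ t ∈ Icc (0:ℝ) U, a t ∈ Icc (0:ℝ) β)
    {φ : ℝ → ℝ} (hφ : Continuous φ)
    {t₁ t₂ : ℝ} (h0 : 0 ≤ t₁) (h12 : t₁ ≤ t₂) (h2 : t₂ ≤ U) :
    IntervalIntegrable (fun s => φ (stateTraj x₀ a s) * a s) volume t₁ t₂ := by
  obtain ⟨C, hC⟩ := (isCompact_Icc (a := x₀) (b := x₀ + β * U)).exists_bound_of_continuousOn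
    hφ.continuousOn
  rw [intervalIntegrable_iff_integrableOn_Ioc_of_le h12]
  have hsub : Ioc t₁ t₂ ⊆ Icc (0:ℝ) U := fun s hs => ⟨le_trans h0 hs.1.le, le_trans hs.2 h2⟩
  have hmeas : AEStronglyMeasurable (fun s => φ (stateTraj x₀ a s) * a s)
      (volume.restrict (Ioc t₁ t₂)) := by
    have h1 : AEStronglyMeasurable (fun s => φ (stateTraj x₀ a s))
        (volume.restrict (Icc (0:ℝ) U)) :=
      ((hφ.comp_continuousOn (aux_cont hβ ha hbd)).aestronglyMeasurable measurableSet_Icc)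
    exact (h1.mono_measure (Measure.restrict_mono hsub le_rfl)).mul
      ha.aestronglyMeasurable.restrict
  refine Integrable.mono' (g := fun _ => C * β)
    (integrableOn_const measure_Ioc_lt_top.ne) hmeas ?_
  refine (ae_restrict_iff' measurableSet_Ioc).2 (Filter.Eventually.of_forall fun s hs => ?_)
  have hmem := hsub hs
  have h1 := hC _ (aux_range hβ ha hbd hmem)
  have h2' := hbd s hmem
  have hC0 : 0 ≤ C := le_trans (norm_nonneg _) (hC x₀ ⟨le_rfl, by nlinarith⟩)
  have hab : |a s| ≤ β := by rw [abs_of_nonneg h2'.1]; exact h2'.2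
  rw [Real.norm_eq_abs, abs_mul]
  exact mul_le_mul (by simpa [Real.norm_eq_abs] using h1) hab (abs_nonneg _) hC0

/-- The key substitution identity: `∫₀ᵁ φ(A s) a s ds = H(A U) − H(x₀)` when `H' = φ`. -/
lemma aux_subst (hU : 0 < U) (hβ : 0 < β) (ha : Measurable a)
    (hbd : ∀ t ∈ Icc (0:ℝ) U, a t ∈ Icc (0:ℝ) β)
    (φ H : ℝ → ℝ) (hφ : Continuous φ) (hH : ∀ x, HasDerivAt H (φ x) x) :
    ∫ s in (0:ℝ)..U, φ (stateTraj x₀ a s) * a s = H (stateTraj x₀ a U) - H x₀ := by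
  set A := stateTraj x₀ a with hA
  refine eq_of_forall_dist_le fun ε hε => ?_
  set K := Icc x₀ (x₀ + β * U) with hK
  have hUC : UniformContinuousOn φ K :=
    isCompact_Icc.uniformContinuousOn_of_continuous hφ.continuousOn
  have hβU : 0 < β * U := mul_pos hβ hU
  set ε' : ℝ := ε / (2 * (β * U) + 1) with hε'
  have hε'pos : 0 < ε' := div_pos hε (by linarith)
  obtain ⟨δ, hδpos, hδ⟩ := Metric.uniformContinuousOn_iff.1 hUC ε' hε'pos
  obtain ⟨n, hn⟩ := exists_nat_gt (β * U / δ)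
  have hn0 : 0 < (n : ℝ) := lt_of_le_of_lt (div_nonneg hβU.le hδpos.le) hn
  have hstep : β * (U / n) < δ := by
    rw [div_lt_iff₀ hδpos] at hn
    rw [← mul_div_assoc, div_lt_iff₀ hn0]
    nlinarith
  have hUn : 0 < U / n := div_pos hU hn0
  set t : ℕ → ℝ := fun i => (i : ℝ) * (U / n) with htdef
  have ht0 : t 0 = 0 := by simp [htdef]
  have htn : t n = U := by
    simp only [htdef]
    field_simp
  have htstep : ∀ i : ℕ, t (i + 1) - t i = U / n := by
    intro i; simp only [htdef]; push_cast; ring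
  have htmono : ∀ i : ℕ, t i ≤ t (i + 1) := fun i => by
    have := htstep i; linarith
  have htmem : ∀ i : ℕ, i ≤ n → t i ∈ Icc (0:ℝ) U := by
    intro i hi
    constructor
    · exact mul_nonneg (Nat.cast_nonneg i) hUn.le
    · have : (i : ℝ) ≤ (n : ℝ) := Nat.cast_le.2 hi
      calc (i : ℝ) * (U / n) ≤ (n : ℝ) * (U / n) :=
            mul_le_mul_of_nonneg_right this hUn.le
        _ = U := by field_simp
  -- split both sides along the partition
  have hsplit : ∫ s in (0:ℝ)..U, φ (A s) * a s
      = ∑ i ∈ Finset.range n, ∫ s in t i..t (i + 1), φ (A s) * a s := by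
    rw [intervalIntegral.sum_integral_adjacent_intervals
      (fun k hk => aux_fInt hβ ha hbd hφ (htmem k hk.le).1 (htmono k)
        (htmem (k + 1) hk).2), ht0, htn]
  have hHsplit : H (A U) - H x₀
      = ∑ i ∈ Finset.range n, (H (A (t (i + 1))) - H (A (t i))) := by
    rw [Finset.sum_range_sub (fun i => H (A (t i))), ht0, htn, hA, aux_zero]
  -- the per-piece estimate
  have hpiece : ∀ i ∈ Finset.range n,
      |(∫ s in t i..t (i + 1), φ (A s) * a s) - (H (A (t (i + 1))) - H (A (t i)))|
        ≤ 2 * (ε' * (β * (U / n))) := by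
    intro i hi
    rw [Finset.mem_range] at hi
    set t₁ := t i
    set t₂ := t (i + 1)
    have h0 : 0 ≤ t₁ := (htmem i hi.le).1
    have h12 : t₁ ≤ t₂ := htmono i
    have h2 : t₂ ≤ U := (htmem (i + 1) hi).2
    have hmem₁ : t₁ ∈ Icc (0:ℝ) U := htmem i hi.le
    have hmem₂ : t₂ ∈ Icc (0:ℝ) U := htmem (i + 1) hi
    have hAd : A t₂ - A t₁ ≤ β * (U / n) := by
      have := aux_lip (x₀ := x₀) hβ ha hbd h0 h12 h2
      have := htstep i
      rw [← hA] at *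
      calc A t₂ - A t₁ ≤ β * (t₂ - t₁) := aux_lip hβ ha hbd h0 h12 h2
        _ = β * (U / n) := by rw [htstep i]
    have hAm : A t₁ ≤ A t₂ := aux_mono hβ ha hbd h0 h12 h2
    have hK₁ : A t₁ ∈ K := aux_range hβ ha hbd hmem₁
    have hK₂ : A t₂ ∈ K := aux_range hβ ha hbd hmem₂
    -- first estimate
    have key1 : |(∫ s in t₁..t₂, φ (A s) * a s) - φ (A t₁) * (A t₂ - A t₁)|
        ≤ ε' * β * (U / n) := by
      have hconst : φ (A t₁) * (A t₂ - A t₁) = ∫ s in t₁..t₂, φ (A t₁) * a s := by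
        rw [intervalIntegral.integral_const_mul, aux_diff hβ ha hbd h0 h12 h2]
      rw [hconst, ← intervalIntegral.integral_sub
        (aux_fInt hβ ha hbd hφ h0 h12 h2)
        ((aux_intInt hβ ha hbd h0 h12 h2).const_mul _)]
      have hbound : ∀ s ∈ uIoc t₁ t₂, ‖φ (A s) * a s - φ (A t₁) * a s‖ ≤ ε' * β := by
        intro s hs
        rw [uIoc_of_le h12] at hs
        have hsmem : s ∈ Icc (0:ℝ) U := ⟨le_trans h0 hs.1.le, le_trans hs.2 h2⟩
        have hKs : A s ∈ K := aux_range hβ ha hbd hsmem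
        have hAs₁ : A t₁ ≤ A s := aux_mono hβ ha hbd h0 hs.1.le (le_trans hs.2 h2)
        have hAs₂ : A s ≤ A t₂ := aux_mono hβ ha hbd (le_trans h0 hs.1.le) hs.2 h2
        have hdist : dist (A s) (A t₁) < δ := by
          rw [Real.dist_eq, abs_of_nonneg (by linarith)]
          linarith
        have hφd : |φ (A s) - φ (A t₁)| ≤ ε' := by
          have := hδ _ hKs _ hK₁ hdist
          rw [Real.dist_eq] at this
          exact this.le
        have h2' := hbd s hsmem
        have : φ (A s) * a s - φ (A t₁) * a s = (φ (A s) - φ (A t₁)) * a s := by ring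
        rw [this, Real.norm_eq_abs, abs_mul, abs_of_nonneg h2'.1]
        exact mul_le_mul hφd h2'.2 h2'.1 hε'pos.le
      have := intervalIntegral.norm_integral_le_of_norm_le_const hbound
      rw [Real.norm_eq_abs] at this
      calc |∫ s in t₁..t₂, (φ (A s) * a s - φ (A t₁) * a s)| ≤ ε' * β * |t₂ - t₁| := this
        _ = ε' * β * (U / n) := by rw [abs_of_nonneg (by linarith), htstep i]
    -- second estimate
    have key2 : |(H (A t₂) - H (A t₁)) - φ (A t₁) * (A t₂ - A t₁)|
        ≤ ε' * (β * (U / n)) := by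
      have hH2 : H (A t₂) - H (A t₁) = ∫ u in A t₁..A t₂, φ u :=
        (intervalIntegral.integral_eq_sub_of_hasDerivAt (fun u _ => hH u)
          (hφ.intervalIntegrable _ _)).symm
      have hconst : φ (A t₁) * (A t₂ - A t₁) = ∫ _u in A t₁..A t₂, φ (A t₁) := by
        rw [intervalIntegral.integral_const, smul_eq_mul, mul_comm]
      rw [hH2, hconst, ← intervalIntegral.integral_sub (hφ.intervalIntegrable _ _)
        intervalIntegrable_const]
      have hbound : ∀ u ∈ uIoc (A t₁) (A t₂), ‖φ u - φ (A t₁)‖ ≤ ε' := by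
        intro u hu
        rw [uIoc_of_le hAm] at hu
        have hKu : u ∈ K := ⟨le_trans hK₁.1 hu.1.le, le_trans hu.2 hK₂.2⟩
        have hdist : dist u (A t₁) < δ := by
          rw [Real.dist_eq, abs_of_nonneg (by linarith [hu.1.le])]
          linarith [hu.2]
        have := hδ _ hKu _ hK₁ hdist
        rw [Real.dist_eq] at this
        exact this.le
      have := intervalIntegral.norm_integral_le_of_norm_le_const hbound
      rw [Real.norm_eq_abs] at this
      calc |∫ u in A t₁..A t₂, (φ u - φ (A t₁))| ≤ ε' * |A t₂ - A t₁| := this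
        _ ≤ ε' * (β * (U / n)) := by
            rw [abs_of_nonneg (by linarith)]
            exact mul_le_mul_of_nonneg_left hAd hε'pos.le
    calc |(∫ s in t₁..t₂, φ (A s) * a s) - (H (A t₂) - H (A t₁))|
        ≤ |(∫ s in t₁..t₂, φ (A s) * a s) - φ (A t₁) * (A t₂ - A t₁)|
          + |(H (A t₂) - H (A t₁)) - φ (A t₁) * (A t₂ - A t₁)| := by
          have : (∫ s in t₁..t₂, φ (A s) * a s) - (H (A t₂) - H (A t₁))
              = ((∫ s in t₁..t₂, φ (A s) * a s) - φ (A t₁) * (A t₂ - A t₁))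
                - ((H (A t₂) - H (A t₁)) - φ (A t₁) * (A t₂ - A t₁)) := by ring
          rw [this]
          exact abs_sub _ _
      _ ≤ ε' * β * (U / n) + ε' * (β * (U / n)) := add_le_add key1 key2
      _ = 2 * (ε' * (β * (U / n))) := by ring
  -- assemble
  rw [Real.dist_eq, hsplit, hHsplit, ← Finset.sum_sub_distrib]
  calc |∑ i ∈ Finset.range n,
        ((∫ s in t i..t (i + 1), φ (A s) * a s) - (H (A (t (i + 1))) - H (A (t i))))|
      ≤ ∑ i ∈ Finset.range n,
        |(∫ s in t i..t (i + 1), φ (A s) * a s) - (H (A (t (i + 1))) - H (A (t i)))| :=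
        Finset.abs_sum_le_sum_abs _ _
    _ ≤ ∑ _i ∈ Finset.range n, 2 * (ε' * (β * (U / n))) :=
        Finset.sum_le_sum hpiece
    _ = n * (2 * (ε' * (β * (U / n)))) := by
        rw [Finset.sum_const, Finset.card_range, nsmul_eq_mul]
    _ = 2 * ε' * (β * U) := by field_simp
    _ ≤ ε := by
        have hD : (0:ℝ) < 2 * (β * U) + 1 := by linarith
        rw [hε', show 2 * (ε / (2 * (β * U) + 1)) * (β * U)
          = ε * (2 * (β * U)) / (2 * (β * U) + 1) from by ring, div_le_iff₀ hD]
        nlinarith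
end Aux

/-- Paper's Theorem 1, case ν > c: against a silent opponent, every admissible
control's payoff is at most `−ν x₀ e^{−x₀}`, and the zero control attains it. -/
theorem silent_opponent_best_response_silence
    (U β c ν x₀ : ℝ) (hU : 0 < U) (hβ : 0 < β) (hc : 0 < c) (hν : 0 < ν)
    (hx₀ : 0 ≤ x₀) (hνc : c < ν) :
    (∀ a : ℝ → ℝ, Measurable a → (∀ t ∈ Icc (0:ℝ) U, a t ∈ Icc (0:ℝ) β) →
        silentPayoff U ν c x₀ a ≤ -(ν * x₀) * Real.exp (-x₀)) ∧
      silentPayoff U ν c x₀ (fun _ => 0) = -(ν * x₀) * Real.exp (-x₀) := by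
  constructor
  · intro a ha hbd
    set φ : ℝ → ℝ := fun x => (c - ν * x) * Real.exp (-x) with hφdef
    set H : ℝ → ℝ := fun x => (ν * x + (ν - c)) * Real.exp (-x) with hHdef
    have hφ : Continuous φ := by fun_prop
    have hH : ∀ x, HasDerivAt H (φ x) x := by
      intro x
      have h1 : HasDerivAt (fun y => ν * y + (ν - c)) ν x := by
        simpa using ((hasDerivAt_id x).const_mul ν).add_const (ν - c)
      have h2 : HasDerivAt (fun y => Real.exp (-y)) (-Real.exp (-x)) x := by
        simpa [Function.comp_def] using (Real.hasDerivAt_exp (-x)).comp x (hasDerivAt_neg x)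
      have h3 := h1.mul h2
      refine h3.congr_deriv ?_
      simp only [hφdef]
      ring
    have hsub := aux_subst (x₀ := x₀) hU hβ ha hbd φ H hφ hH
    have hint : (∫ s in (0:ℝ)..U, (c - ν * stateTraj x₀ a s)
        * Real.exp (-(stateTraj x₀ a s)) * a s)
        = H (stateTraj x₀ a U) - H x₀ := hsub
    rw [silentPayoff, hint]
    set x := stateTraj x₀ a U with hx
    have hxge : x₀ ≤ x := by
      have := aux_range (x₀ := x₀) hβ ha hbd (t := U) ⟨hU.le, le_rfl⟩
      exact this.1
    have hexp : Real.exp (-x) ≤ Real.exp (-x₀) := Real.exp_le_exp.2 (by linarith)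
    have hexp0 : 0 < Real.exp (-x) := Real.exp_pos _
    simp only [hHdef]
    nlinarith [mul_le_mul_of_nonneg_left hexp (le_of_lt (sub_pos.2 hνc))]
  · have hA0 : ∀ t : ℝ, stateTraj x₀ (fun _ => 0) t = x₀ := by
      intro t; simp [stateTraj]
    simp only [silentPayoff, hA0, mul_zero, intervalIntegral.integral_zero]
    ring
end

section
/- Suppose ν ≥ 1 and let h : [0,T] → [0,1] be any measurable function. Then for every admissible control a : [0,T] → [0,β], the payoff J_h(a) = ∫₀ᵀ (h(s) − ν A(s)) e^{−A(s)} a(s) ds − ν A(T) e^{−A(T)} satisfies J_h(a) ≤ 0, with equality for the zero control a ≡ 0. In particular, in the one-lock game with ν ≥ 1, remaining silent is a best response against every strategy of the opponent, and both agents remaining silent is a Nash equilibrium. (Claim stated in the paper before Theorem 2.) -/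
/-!
Against an opponent survival `h ≤ 1` the payoff of a control `a` is at most its payoff against
`h ≡ 1`. By the chain rule for the absolutely continuous cumulative rate `A`, the integrand
`(1 - ν A) e^{-A} a` is the derivative of `(ν (1 + A) - 1) e^{-A}`, so that payoff equals
`(ν - 1) (e^{-A(T)} - 1)`, which is nonpositive when `ν ≥ 1` because `A(T) ≥ 0`.
-/

open MeasureTheory Real Set

/-- Cumulative rate `A(t) = ∫₀ᵗ a(s) ds` of a control `a`. -/
noncomputable def cum (a : ℝ → ℝ) (t : ℝ) : ℝ := ∫ s in (0:ℝ)..t, a s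

/-- One-lock payoff of agent `i`:
`Jⁱ(a,b) = ∫₀ᵀ (e^{−B(s)} − ν A(s)) e^{−A(s)} a(s) ds − ν A(T) e^{−A(T)}`. -/
noncomputable def oneLockPayoff (T ν : ℝ) (a b : ℝ → ℝ) : ℝ :=
  (∫ s in (0:ℝ)..T,
      (Real.exp (-(cum b s)) - ν * cum a s) * Real.exp (-(cum a s)) * a s)
    - ν * cum a T * Real.exp (-(cum a T))

/-- Time-threshold control `Γ_β(ψ)(t) = β · 𝟙_{[0,ψ]}(t)`. -/
noncomputable def threshold (β ψ : ℝ) : ℝ → ℝ :=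
  fun t => if t ∈ Set.Icc (0:ℝ) ψ then β else 0

/-- One-lock payoff against a general measurable opponent-survival function
`h : [0,T] → [0,1]`:
`J_h(a) = ∫₀ᵀ (h(s) − ν A(s)) e^{−A(s)} a(s) ds − ν A(T) e^{−A(T)}`. -/
noncomputable def hPayoff (T ν : ℝ) (h : ℝ → ℝ) (a : ℝ → ℝ) : ℝ :=
  (∫ s in (0:ℝ)..T, (h s - ν * cum a s) * Real.exp (-(cum a s)) * a s)
    - ν * cum a T * Real.exp (-(cum a T))

open Filter
open scoped Interval

theorem LipschitzOnWith.comp_absolutelyContinuousOnInterval {X Y : Type*}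
    [PseudoMetricSpace X] [PseudoMetricSpace Y] {g : X → Y} {K : NNReal} {s : Set X}
    {f : ℝ → X} {a b : ℝ} (hg : LipschitzOnWith K g s)
    (hf : AbsolutelyContinuousOnInterval f a b) (hfs : MapsTo f (uIcc a b) s) :
    AbsolutelyContinuousOnInterval (g ∘ f) a b := by
  unfold AbsolutelyContinuousOnInterval at hf ⊢
  have hKf := hf.const_mul (K : ℝ)
  rw [mul_zero] at hKf
  refine squeeze_zero' (Eventually.of_forall fun E => Finset.sum_nonneg fun i _ => dist_nonneg)
    ?_ hKf
  refine eventually_inf_principal.2 (Eventually.of_forall fun E hE => ?_)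
  rw [Finset.mul_sum]
  exact Finset.sum_le_sum fun i hi =>
    hg.dist_le_mul _ (hfs (hE.1 i hi).1) _ (hfs (hE.1 i hi).2)

theorem ContDiff.comp_absolutelyContinuousOnInterval {g f : ℝ → ℝ} {a b : ℝ}
    (hg : ContDiff ℝ 1 g) (hf : AbsolutelyContinuousOnInterval f a b) :
    AbsolutelyContinuousOnInterval (g ∘ f) a b := by
  obtain ⟨K, hK⟩ := hg.locallyLipschitz.locallyLipschitzOn.exists_lipschitzOnWith_of_compact
    (isCompact_uIcc.image_of_continuousOn hf.continuousOn)
  exact hK.comp_absolutelyContinuousOnInterval hf (mapsTo_image f _)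

theorem intervalIntegral.integral_comp_primitive_mul {f F F' : ℝ → ℝ} {a b : ℝ}
    (hf : IntervalIntegrable f volume a b) (hF : ∀ x, HasDerivAt F (F' x) x)
    (hF' : Continuous F') :
    ∫ x in a..b, F' (∫ t in a..x, f t) * f x = F (∫ t in a..b, f t) - F 0 := by
  have hFC1 : ContDiff ℝ 1 F := by
    rw [contDiff_one_iff_deriv]
    exact ⟨fun x => (hF x).differentiableAt, by
      simpa only [funext fun x => (hF x).deriv] using hF'⟩
  have hFTC := (hFC1.comp_absolutelyContinuousOnInterval
    (hf.absolutelyContinuousOnInterval_intervalIntegral left_mem_uIcc)).integral_deriv_eq_sub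
  simp only [Function.comp_apply, intervalIntegral.integral_same] at hFTC
  rw [← hFTC]
  refine intervalIntegral.integral_congr_ae ?_
  filter_upwards [hf.ae_hasDerivAt_integral] with x hx hxab
  exact (((hF _).comp x (hx (uIoc_subset_uIcc hxab) a left_mem_uIcc)).deriv).symm

theorem IntervalIntegrable.bdd_mul {f g : ℝ → ℝ} {a b c : ℝ}
    (hg : IntervalIntegrable g volume a b) (hf : AEStronglyMeasurable f (volume.restrict (Ι a b)))
    (hbound : ∀ x ∈ Ι a b, |f x| ≤ c) : IntervalIntegrable (fun x => f x * g x) volume a b :=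
  intervalIntegrable_iff.2 <| (intervalIntegrable_iff.1 hg).bdd_mul hf <|
    (ae_restrict_iff' measurableSet_uIoc).2 (ae_of_all _ hbound)

theorem intervalIntegrable_of_mapsTo_Icc {f : ℝ → ℝ} {a b c d : ℝ} (hab : a ≤ b)
    (hf : Measurable f) (hfcd : MapsTo f (Icc a b) (Icc c d)) :
    IntervalIntegrable f volume a b := by
  rw [intervalIntegrable_iff_integrableOn_Icc_of_le hab]
  refine Measure.integrableOn_of_bounded (M := max |c| |d|) measure_Icc_lt_top.ne
    hf.aestronglyMeasurable ((ae_restrict_iff' measurableSet_Icc).2 (ae_of_all _ fun x hx => ?_))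
  exact abs_le_max_abs_abs (hfcd hx).1 (hfcd hx).2

theorem cum_nonneg {a : ℝ → ℝ} {s T : ℝ} (hs : s ∈ Icc 0 T) (ha : ∀ u ∈ Icc 0 T, 0 ≤ a u) :
    0 ≤ cum a s :=
  intervalIntegral.integral_nonneg hs.1 fun u hu => ha u ⟨hu.1, hu.2.trans hs.2⟩

theorem exp_neg_cum_mem_Icc {b : ℝ → ℝ} {s T : ℝ} (hs : s ∈ Icc 0 T)
    (hb : ∀ u ∈ Icc 0 T, 0 ≤ b u) : exp (-cum b s) ∈ Icc 0 1 :=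
  ⟨(exp_pos _).le, exp_le_one_iff.2 (neg_nonpos.2 (cum_nonneg hs hb))⟩

theorem hasDerivAt_affine_mul_exp_neg (ν u : ℝ) :
    HasDerivAt (fun u => (ν * (1 + u) - 1) * exp (-u)) ((1 - ν * u) * exp (-u)) u := by
  refine (((((hasDerivAt_id' u).const_add 1).const_mul ν).sub_const 1).mul
    (hasDerivAt_neg u).exp).congr_deriv ?_
  ring

theorem hPayoff_one {T ν : ℝ} {a : ℝ → ℝ} (ha : IntervalIntegrable a volume 0 T) :
    hPayoff T ν (fun _ => 1) a = (ν - 1) * (exp (-cum a T) - 1) := by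
  have hchain := intervalIntegral.integral_comp_primitive_mul ha
    (hasDerivAt_affine_mul_exp_neg ν) (by fun_prop)
  simp only [hPayoff, cum, hchain, add_zero, mul_one, neg_zero, exp_zero]
  ring

theorem abs_sub_mul_mul_exp_neg_le {η ν x : ℝ} (hη : η ∈ Icc 0 1) (hx : 0 ≤ x) :
    |(η - ν * x) * exp (-x)| ≤ 1 + |ν| := by
  have hexp : exp (-x) ≤ 1 := exp_le_one_iff.2 (neg_nonpos.2 hx)
  have hxexp : x * exp (-x) ≤ 1 := by
    rw [exp_neg, ← div_eq_mul_inv, div_le_one (exp_pos x)]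
    linarith [add_one_le_exp x]
  have hsub : |η - ν * x| ≤ 1 + |ν| * x := by
    calc |η - ν * x| ≤ |η| + |ν * x| := abs_sub _ _
      _ = η + |ν| * x := by rw [abs_of_nonneg hη.1, abs_mul, abs_of_nonneg hx]
      _ ≤ 1 + |ν| * x := by linarith [hη.2]
  calc |(η - ν * x) * exp (-x)| = |η - ν * x| * exp (-x) := by
        rw [abs_mul, abs_of_pos (exp_pos _)]
    _ ≤ (1 + |ν| * x) * exp (-x) := by gcongr
    _ = exp (-x) + |ν| * (x * exp (-x)) := by ring
    _ ≤ 1 + |ν| * 1 := by gcongr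
    _ = 1 + |ν| := by ring

theorem hPayoff_le_hPayoff_one {T ν : ℝ} {h a : ℝ → ℝ} (hT : 0 ≤ T)
    (ha : IntervalIntegrable a volume 0 T) (ha0 : ∀ s ∈ Icc 0 T, 0 ≤ a s)
    (hh : AEStronglyMeasurable h (volume.restrict (Ι 0 T)))
    (hh01 : ∀ s ∈ Icc 0 T, h s ∈ Icc 0 1) :
    hPayoff T ν h a ≤ hPayoff T ν (fun _ => 1) a := by
  have hIoc : Ι 0 T ⊆ Icc 0 T := by rw [uIoc_of_le hT]; exact Ioc_subset_Icc_self
  have hAc : ContinuousOn (cum a) (uIcc 0 T) :=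
    intervalIntegral.continuousOn_primitive_interval' ha left_mem_uIcc
  have hAm : AEStronglyMeasurable (cum a) (volume.restrict (Ι 0 T)) :=
    (hAc.mono uIoc_subset_uIcc).aestronglyMeasurable measurableSet_uIoc
  have hint_h : IntervalIntegrable
      (fun s => (h s - ν * cum a s) * exp (-cum a s) * a s) volume 0 T :=
    ha.bdd_mul ((hh.sub (hAm.const_mul ν)).mul (continuous_exp.comp_aestronglyMeasurable hAm.neg))
      fun s hs => abs_sub_mul_mul_exp_neg_le (hh01 s (hIoc hs)) (cum_nonneg (hIoc hs) ha0)
  have hint_one : IntervalIntegrable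
      (fun s => (1 - ν * cum a s) * exp (-cum a s) * a s) volume 0 T :=
    ha.continuousOn_mul ((continuousOn_const.sub (hAc.const_smul ν)).mul hAc.neg.rexp)
  refine sub_le_sub_right (intervalIntegral.integral_mono_on hT hint_h hint_one fun s hs => ?_) _
  have := ha0 s hs
  gcongr
  exact (hh01 s hs).2

theorem hPayoff_nonpos {T ν : ℝ} {h a : ℝ → ℝ} (hν : 1 ≤ ν) (hT : 0 ≤ T)
    (ha : IntervalIntegrable a volume 0 T) (ha0 : ∀ s ∈ Icc 0 T, 0 ≤ a s)
    (hh : AEStronglyMeasurable h (volume.restrict (Ι 0 T)))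
    (hh01 : ∀ s ∈ Icc 0 T, h s ∈ Icc 0 1) :
    hPayoff T ν h a ≤ 0 :=
  calc hPayoff T ν h a ≤ hPayoff T ν (fun _ => 1) a := hPayoff_le_hPayoff_one hT ha ha0 hh hh01
    _ = (ν - 1) * (exp (-cum a T) - 1) := hPayoff_one ha
    _ ≤ 0 := mul_nonpos_of_nonneg_of_nonpos (by linarith)
      (sub_nonpos.2 (exp_neg_cum_mem_Icc (right_mem_Icc.2 hT) ha0).2)

theorem hPayoff_zero (T ν : ℝ) (h : ℝ → ℝ) : hPayoff T ν h (fun _ => 0) = 0 := by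
  simp [hPayoff, cum]

theorem oneLockPayoff_le_silent {T ν : ℝ} {a b : ℝ → ℝ} (hν : 1 ≤ ν) (hT : 0 ≤ T)
    (ha : IntervalIntegrable a volume 0 T) (ha0 : ∀ s ∈ Icc 0 T, 0 ≤ a s)
    (hb : IntervalIntegrable b volume 0 T) (hb0 : ∀ s ∈ Icc 0 T, 0 ≤ b s) :
    oneLockPayoff T ν a b ≤ oneLockPayoff T ν (fun _ => 0) b := by
  have hBm : AEStronglyMeasurable (cum b) (volume.restrict (Ι 0 T)) :=
    ((intervalIntegral.continuousOn_primitive_interval' hb left_mem_uIcc).mono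
      uIoc_subset_uIcc).aestronglyMeasurable measurableSet_uIoc
  calc oneLockPayoff T ν a b = hPayoff T ν (fun s => exp (-cum b s)) a := rfl
    _ ≤ 0 := hPayoff_nonpos hν hT ha ha0 (continuous_exp.comp_aestronglyMeasurable hBm.neg)
      fun s hs => exp_neg_cum_mem_Icc hs hb0
    _ = oneLockPayoff T ν (fun _ => 0) b := (hPayoff_zero T ν _).symm

theorem silence_optimal_nu_ge_one_general
    (T ν β : ℝ) (hT : 0 < T) (hν : 1 ≤ ν)
    (h : ℝ → ℝ) (hmeas : Measurable h)
    (hrange : ∀ t ∈ Icc (0:ℝ) T, h t ∈ Icc (0:ℝ) 1) :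
    (∀ a : ℝ → ℝ, Measurable a → (∀ t ∈ Icc (0:ℝ) T, a t ∈ Icc (0:ℝ) β) →
        hPayoff T ν h a ≤ 0) ∧
    hPayoff T ν h (fun _ => 0) = 0 ∧
    -- remaining silent is a best response against every opponent strategy
    (∀ b : ℝ → ℝ, Measurable b → (∀ t ∈ Icc (0:ℝ) T, b t ∈ Icc (0:ℝ) β) →
      ∀ a : ℝ → ℝ, Measurable a → (∀ t ∈ Icc (0:ℝ) T, a t ∈ Icc (0:ℝ) β) →
        oneLockPayoff T ν a b ≤ oneLockPayoff T ν (fun _ => 0) b) ∧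
    -- both agents remaining silent is a Nash equilibrium
    (∀ a : ℝ → ℝ, Measurable a → (∀ t ∈ Icc (0:ℝ) T, a t ∈ Icc (0:ℝ) β) →
        oneLockPayoff T ν a (fun _ => 0)
          ≤ oneLockPayoff T ν (fun _ => 0) (fun _ => 0)) ∧
    (∀ b : ℝ → ℝ, Measurable b → (∀ t ∈ Icc (0:ℝ) T, b t ∈ Icc (0:ℝ) β) →
        oneLockPayoff T ν b (fun _ => 0)
          ≤ oneLockPayoff T ν (fun _ => 0) (fun _ => 0)) := by
  have integrable {a : ℝ → ℝ} (ha : Measurable a) (har : ∀ t ∈ Icc (0:ℝ) T, a t ∈ Icc (0:ℝ) β) :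
      IntervalIntegrable a volume 0 T :=
    intervalIntegrable_of_mapsTo_Icc hT.le ha har
  have silent_best {a b : ℝ → ℝ} (ha : IntervalIntegrable a volume 0 T)
      (ha0 : ∀ s ∈ Icc 0 T, 0 ≤ a s) (hb : IntervalIntegrable b volume 0 T)
      (hb0 : ∀ s ∈ Icc 0 T, 0 ≤ b s) :
      oneLockPayoff T ν a b ≤ oneLockPayoff T ν (fun _ => 0) b :=
    oneLockPayoff_le_silent hν hT.le ha ha0 hb hb0
  refine ⟨fun a ha har => hPayoff_nonpos hν hT.le (integrable ha har) (fun s hs => (har s hs).1)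
      hmeas.aestronglyMeasurable hrange, hPayoff_zero T ν h,
    fun b hb hbr a ha har => silent_best (integrable ha har) (fun s hs => (har s hs).1)
      (integrable hb hbr) (fun s hs => (hbr s hs).1),
    fun a ha har => silent_best (integrable ha har) (fun s hs => (har s hs).1)
      intervalIntegrable_const fun _ _ => le_rfl,
    fun b hb hbr => silent_best (integrable hb hbr) (fun s hs => (hbr s hs).1)
      intervalIntegrable_const fun _ _ => le_rfl⟩

/-- Claim stated in the paper before Theorem 2: if `ν ≥ 1`, then for every
measurable `h : [0,T] → [0,1]` the payoff of every admissible control is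
nonpositive, with equality for the zero control; in particular, in the
one-lock game remaining silent is a best response against every strategy of
the opponent, and both agents remaining silent is a Nash equilibrium. -/
theorem silence_optimal_nu_ge_one
    (T ν β : ℝ) (hT : 0 < T) (hβ : 0 < β) (hν : 1 ≤ ν)
    (h : ℝ → ℝ) (hmeas : Measurable h)
    (hrange : ∀ t ∈ Icc (0:ℝ) T, h t ∈ Icc (0:ℝ) 1) :
    (∀ a : ℝ → ℝ, Measurable a → (∀ t ∈ Icc (0:ℝ) T, a t ∈ Icc (0:ℝ) β) →
        hPayoff T ν h a ≤ 0) ∧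
    hPayoff T ν h (fun _ => 0) = 0 ∧
    -- remaining silent is a best response against every opponent strategy
    (∀ b : ℝ → ℝ, Measurable b → (∀ t ∈ Icc (0:ℝ) T, b t ∈ Icc (0:ℝ) β) →
      ∀ a : ℝ → ℝ, Measurable a → (∀ t ∈ Icc (0:ℝ) T, a t ∈ Icc (0:ℝ) β) →
        oneLockPayoff T ν a b ≤ oneLockPayoff T ν (fun _ => 0) b) ∧
    -- both agents remaining silent is a Nash equilibrium
    (∀ a : ℝ → ℝ, Measurable a → (∀ t ∈ Icc (0:ℝ) T, a t ∈ Icc (0:ℝ) β) →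
        oneLockPayoff T ν a (fun _ => 0)
          ≤ oneLockPayoff T ν (fun _ => 0) (fun _ => 0)) ∧
    (∀ b : ℝ → ℝ, Measurable b → (∀ t ∈ Icc (0:ℝ) T, b t ∈ Icc (0:ℝ) β) →
        oneLockPayoff T ν b (fun _ => 0)
          ≤ oneLockPayoff T ν (fun _ => 0) (fun _ => 0)) :=
  silence_optimal_nu_ge_one_general T ν β hT hν h hmeas hrange
end
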